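/- arXiv:2310.12354 — 6 statements merged into one kernel-verified Lean document; each statement's English description precedes it below -/
import Mathlib

section
/- Let I be a finite set, B : I × I → ℂ a pairing, Feg, Deg : I → ℂ[q] polynomials, and h, f : I → ℤ functions. Assume: (T1) for every χ ∈ I, Deg_χ = Σ_{φ ∈ I} B(χ,φ)·Feg_φ as polynomials; (T2) B(χ,φ) = B(φ,χ) for all χ, φ ∈ I; (T3) B(χ,φ) ≠ 0 implies h(χ) = h(φ); and f satisfies h(χ) = h(φ) ⟹ f(χ) = f(φ). Then for all q₁, q₂, q₃ ∈ ℂ with q₁ ≠ 0, Σ_{χ ∈ I} q₁^{f(χ)} · Feg_χ(q₂) · Deg_χ(q₃) = Σ_{χ ∈ I} q₁^{f(χ)} · Feg_χ(q₃) · Deg_χ(q₂), where q₁^{f(χ)} denotes the integer power (zpow) and Feg_χ(q), Deg_χ(q) denote polynomial evaluation. -/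
/-- **The abstract Fourier-transform swap lemma.**
If a pairing `B` on a finite index set `I` transforms the polynomials `Deg` into the
polynomials `Feg` (T1), is symmetric (T2), and only pairs indices with the same value of `h`
(T3), then for any function `f` constant on the level sets of `h`, the weighted sums of
`Feg`/`Deg` evaluations are symmetric in the two evaluation points. -/
theorem fourier_swap {I : Type*} [Fintype I] (B : I × I → ℂ) (Feg Deg : I → Polynomial ℂ)
    (h f : I → ℤ)
    (T1 : ∀ χ, Deg χ = ∑ φ, B (χ, φ) • Feg φ)
    (T2 : ∀ χ φ, B (χ, φ) = B (φ, χ))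
    (T3 : ∀ χ φ, B (χ, φ) ≠ 0 → h χ = h φ)
    (hf : ∀ χ φ, h χ = h φ → f χ = f φ) :
    ∀ q₁ q₂ q₃ : ℂ, q₁ ≠ 0 →
      ∑ χ, q₁ ^ (f χ) * (Feg χ).eval q₂ * (Deg χ).eval q₃ =
        ∑ χ, q₁ ^ (f χ) * (Feg χ).eval q₃ * (Deg χ).eval q₂ := by
  intro q₁ q₂ q₃ _
  have key : ∀ q q' : ℂ,
      ∑ χ, q₁ ^ (f χ) * (Feg χ).eval q * (Deg χ).eval q' =
      ∑ χ, ∑ φ, q₁ ^ (f χ) * B (χ, φ) * (Feg χ).eval q * (Feg φ).eval q' := by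
    intro q q'
    refine Finset.sum_congr rfl fun χ _ => ?_
    rw [T1 χ]
    simp [Polynomial.eval_finset_sum, Finset.mul_sum]
    exact Finset.sum_congr rfl fun φ _ => by ring
  rw [key, key]
  rw [Finset.sum_comm]
  refine Finset.sum_congr rfl fun χ _ => Finset.sum_congr rfl fun φ _ => ?_
  by_cases hB : B (φ, χ) = 0
  · simp [hB, T2 χ φ]
  · have := hf φ χ (T3 φ χ hB)
    rw [T2 χ φ, this]
    ring
end

section
/- Let m ≥ 2 and n ≥ 1 be integers and let p ≥ 1 be an integer coprime to m·n. Then the image of the map j ↦ (p·(j·m − 1)) mod (m·n) on the set {1, 2, …, n} equals the image of the map j ↦ j·m − (p mod m) on the set {1, 2, …, n} (as finite sets of natural numbers). -/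
private lemma inj_aux {n j j' : ℕ} (hj1 : 1 ≤ j) (hj2 : j ≤ n) (hj1' : 1 ≤ j')
    (hj2' : j' ≤ n) (hle : j ≤ j') (h : j ≡ j' [MOD n]) : j = j' := by
  obtain ⟨k, hk⟩ := (Nat.modEq_iff_dvd' hle).mp h
  rcases Nat.eq_zero_or_pos k with rfl | hk0
  · simp at hk; omega
  · have h1 : n * 1 ≤ n * k := Nat.mul_le_mul_left n hk0
    omega

/-- For `G(m,1,n)` (Coxeter number `h = mn`, exponents `e_j = jm - 1`), the residues
`p·(jm − 1) mod mn` for `j = 1,…,n` are exactly the numbers `jm − (p mod m)` for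
`j = 1,…,n`, when `p` is coprime to `mn`. -/
theorem exponent_set_eq (m n p : ℕ) (hm : 2 ≤ m) (hn : 1 ≤ n) (hp : 1 ≤ p)
    (hcop : Nat.Coprime p (m * n)) :
    (Finset.Icc 1 n).image (fun j => (p * (j * m - 1)) % (m * n)) =
      (Finset.Icc 1 n).image (fun j => j * m - p % m) := by
  have hm0 : 0 < m := by omega
  have hmn0 : 0 < m * n := Nat.mul_pos hm0 hn
  have hcopm : Nat.Coprime p m := hcop.coprime_dvd_right (dvd_mul_right m n)
  have hr1 : 1 ≤ p % m := by
    rcases Nat.eq_zero_or_pos (p % m) with h0 | h1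
    · exfalso
      have hdvd : m ∣ p := Nat.dvd_of_mod_eq_zero h0
      have h2 : m ∣ Nat.gcd p m := Nat.dvd_gcd hdvd dvd_rfl
      rw [hcopm] at h2
      have := Nat.le_of_dvd Nat.one_pos h2
      omega
    · exact h1
  have hrm : p % m < m := Nat.mod_lt _ hm0
  -- injectivity of the LHS map
  have hinj : Set.InjOn (fun j => (p * (j * m - 1)) % (m * n)) (Finset.Icc 1 n) := by
    intro j hj j' hj' heq
    simp only [Finset.coe_Icc, Set.mem_Icc] at hj hj'
    have h1 : p * (j * m - 1) ≡ p * (j' * m - 1) [MOD m * n] := heq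
    have h2 : j * m - 1 ≡ j' * m - 1 [MOD m * n] :=
      Nat.ModEq.cancel_left_of_coprime (Nat.Coprime.gcd_eq_one hcop.symm) h1
    have h3 := h2.add_right 1
    have e1 : j * m - 1 + 1 = j * m := Nat.sub_add_cancel (Nat.mul_pos hj.1 hm0)
    have e1' : j' * m - 1 + 1 = j' * m := Nat.sub_add_cancel (Nat.mul_pos hj'.1 hm0)
    rw [e1, e1', mul_comm m n] at h3
    have h4 : j ≡ j' [MOD n] := Nat.ModEq.mul_right_cancel' (by omega) h3
    rcases le_total j j' with hle | hle
    · exact inj_aux hj.1 hj.2 hj'.1 hj'.2 hle h4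
    · exact (inj_aux hj'.1 hj'.2 hj.1 hj.2 hle h4.symm).symm
  -- injectivity of the RHS map
  have hinj' : Set.InjOn (fun j => j * m - p % m) (Finset.Icc 1 n) := by
    intro j hj j' hj' heq
    simp only [Finset.coe_Icc, Set.mem_Icc] at hj hj'
    have hjm : m ≤ j * m := Nat.le_mul_of_pos_left m hj.1
    have hjm' : m ≤ j' * m := Nat.le_mul_of_pos_left m hj'.1
    simp only at heq
    have : j * m = j' * m := by omega
    exact Nat.eq_of_mul_eq_mul_right hm0 this
  -- subset
  have hsub : (Finset.Icc 1 n).image (fun j => (p * (j * m - 1)) % (m * n)) ⊆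
      (Finset.Icc 1 n).image (fun j => j * m - p % m) := by
    intro x hx
    simp only [Finset.mem_image, Finset.mem_Icc] at hx ⊢
    obtain ⟨j, ⟨hj1, hj2⟩, rfl⟩ := hx
    set x := (p * (j * m - 1)) % (m * n) with hxdef
    have hxlt : x < m * n := Nat.mod_lt _ hmn0
    have hmod : x % m = (p * (j * m - 1)) % m :=
      Nat.mod_mod_of_dvd _ (dvd_mul_right m n)
    have h1 : x + p % m ≡ p * (j * m - 1) + p [MOD m] :=
      Nat.ModEq.add hmod (Nat.mod_modEq p m)
    have h2 : p * (j * m - 1) + p = p * j * m := by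
      have e1 : j * m - 1 + 1 = j * m := Nat.sub_add_cancel (Nat.mul_pos hj1 hm0)
      calc p * (j * m - 1) + p = p * ((j * m - 1) + 1) := (Nat.mul_succ p _).symm
        _ = p * (j * m) := by rw [e1]
        _ = p * j * m := (mul_assoc p j m).symm
    have h3 : x + p % m ≡ p * j * m [MOD m] := h2 ▸ h1
    have h4 : p * j * m ≡ 0 [MOD m] :=
      (Nat.modEq_zero_iff_dvd).mpr (dvd_mul_left m (p * j))
    have h5 : (x + p % m) % m = 0 := by
      have := h3.trans h4
      simpa [Nat.ModEq] using this
    obtain ⟨k, hk⟩ := Nat.dvd_of_mod_eq_zero h5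
    have hk1 : 1 ≤ k := by
      rcases Nat.eq_zero_or_pos k with rfl | h; · simp at hk; omega
      · exact h
    have hk2 : k ≤ n := by
      have heq : m * (n + 1) = m * n + m := by ring
      have h6 : m * k < m * (n + 1) := by omega
      exact Nat.lt_succ_iff.mp (Nat.lt_of_mul_lt_mul_left h6)
    exact ⟨k, ⟨hk1, hk2⟩, by rw [mul_comm k m]; omega⟩
  -- conclude by cardinality
  apply Finset.eq_of_subset_of_card_le hsub
  rw [Finset.card_image_of_injOn hinj, Finset.card_image_of_injOn hinj']
end

section
/- Let m ≥ 2 and n ≥ 2 be integers and let p ≥ 1 be an integer coprime to m·(n−1). Then in the polynomial ring ℤ[X] one has (X^n − 1) · Σ_{j=0}^{m−1} X^{j·(n−1) + ((j − p) mod m)} = (X^m − 1) · ( X^{(p·(n−1)) mod (m·(n−1))} + Σ_{j=1}^{n−1} X^{(p·(j·m − 1)) mod (m·(n−1))} ), where (j − p) mod m denotes the representative in {0, 1, …, m−1} of j − p modulo m. -/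
/-!
Write `e = n - 1`, `q = p % m` (nonzero, as `p` is prime to `m`) and `t = m - q`.
Since `p (jm - 1) ≡ t [MOD m]` and `p` is a unit modulo `e`, the exponents `p (jm - 1) % me`,
`1 ≤ j ≤ e`, run exactly once through `mi + t`, `i < e`. On the left,
`(j - p) mod m = (j + t) % m`, and splitting the sum at `j = q` leaves two geometric sums in
`X ^ (e + 1)`. Both sides then telescope to `X ^ (qe + m) + X ^ (me + t) - X ^ qe - X ^ t`.
-/

open Polynomial Finset

theorem Nat.mul_add_mod_mul_of_lt {m t : ℕ} (y e : ℕ) (ht : t < m) :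
    (m * y + t) % (m * e) = m * (y % e) + t := by
  rw [Nat.mod_mul, Nat.mul_add_mod, Nat.mod_eq_of_lt ht, Nat.mul_add_div (by omega),
    Nat.div_eq_of_lt ht, add_zero, add_comm]

theorem Finset.sum_range_mul_add_mod {M : Type*} [AddCommMonoid M] (f : ℕ → M) {a e : ℕ}
    (ha : a.Coprime e) (b : ℕ) :
    ∑ k ∈ range e, f ((a * k + b) % e) = ∑ i ∈ range e, f i := by
  have hmaps : Set.MapsTo (fun k ↦ (a * k + b) % e) (range e) (range e) := fun k hk ↦
    mem_range.2 (Nat.mod_lt _ (pos_of_ne_zero (by rintro rfl; simp at hk)))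
  have hinj : Set.InjOn (fun k ↦ (a * k + b) % e) (range e) := by
    intro k hk l hl hkl
    have : k ≡ l [MOD e] :=
      Nat.ModEq.cancel_left_of_coprime (Nat.coprime_comm.1 ha) (Nat.ModEq.add_right_cancel' b hkl)
    rwa [Nat.ModEq, Nat.mod_eq_of_lt (mem_range.1 hk), Nat.mod_eq_of_lt (mem_range.1 hl)] at this
  exact sum_nbij _ hmaps hinj (surjOn_of_injOn_of_card_le _ hmaps hinj le_rfl) fun _ _ ↦ rfl

theorem Int.toNat_natCast_sub_emod {m p t : ℕ} (j : ℕ) (h : m ∣ p + t) :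
    (((j : ℤ) - p) % m).toNat = (j + t) % m := by
  have : (j : ℤ) - p ≡ (j + t : ℕ) [ZMOD m] :=
    Int.modEq_iff_dvd.2 (by rw [Nat.cast_add, add_sub_sub_cancel, add_comm]; exact_mod_cast h)
  rw [this.eq, ← Int.natCast_mod, Int.toNat_natCast]

theorem Nat.mul_add_one_mul_sub_one {m p : ℕ} (k : ℕ) (hp : 0 < p % m) :
    p * ((k + 1) * m - 1) = m * (p * k + (p - p / m - 1)) + (m - p % m) := by
  rcases Nat.eq_zero_or_pos m with rfl | hm₀
  · simp
  have hm : 1 < m := lt_of_le_of_lt hp (Nat.mod_lt _ hm₀)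
  have hdiv : p / m + 1 ≤ p :=
    Nat.div_lt_self (Nat.pos_of_ne_zero (by rintro rfl; simp at hp)) hm
  have hmod : p % m ≤ m := (Nat.mod_lt _ hm₀).le
  have hkm : 1 ≤ (k + 1) * m := Nat.one_le_iff_ne_zero.2 (by positivity)
  have hdecomp := Nat.div_add_mod p m
  generalize p / m = a at *
  generalize p % m = q at *
  rw [Nat.sub_sub]
  zify [hdiv, hmod, hkm] at hdecomp ⊢
  linear_combination hdecomp

theorem sum_range_pow_mul_add_mod {R : Type*} [Semiring R] (x : R) {q t m : ℕ} (h : q + t = m)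
    (e : ℕ) :
    ∑ j ∈ range m, x ^ (j * e + (j + t) % m) =
      x ^ t * ∑ j ∈ range q, (x ^ (e + 1)) ^ j +
        x ^ (q * e) * ∑ k ∈ range t, (x ^ (e + 1)) ^ k := by
  subst h
  rw [sum_range_add, mul_sum, mul_sum]
  congr 1 <;> refine sum_congr rfl fun j hj ↦ ?_ <;> rw [← pow_mul, ← pow_add] <;> congr 1
  · rw [Nat.mod_eq_of_lt (by simp at hj; omega)]; ring
  · rw [show q + j + t = j + (q + t) * 1 by ring, Nat.add_mul_mod_self_left,
      Nat.mod_eq_of_lt (by simp at hj; omega)]; ring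

theorem pow_succ_sub_one_mul_sum_range_pow_mul_add_mod {R : Type*} [CommRing R] (x : R)
    {q t m : ℕ} (h : q + t = m) (e : ℕ) :
    (x ^ (e + 1) - 1) * ∑ j ∈ range m, x ^ (j * e + (j + t) % m) =
      (x ^ m - 1) * (x ^ (q * e) + x ^ t * ∑ i ∈ range e, (x ^ m) ^ i) := by
  rw [sum_range_pow_mul_add_mod x h]
  have g₁ := geom_sum_mul (x ^ (e + 1)) q
  have g₂ := geom_sum_mul (x ^ (e + 1)) t
  have g₃ := mul_geom_sum (x ^ m) e
  subst h
  linear_combination x ^ t * g₁ + x ^ (q * e) * g₂ - x ^ t * g₃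

theorem sum_Icc_pow_mul_mul_sub_one_mod {R : Type*} [Semiring R] (x : R) {m p e : ℕ}
    (hp : 0 < p % m) (hcop : p.Coprime e) :
    ∑ j ∈ Icc 1 e, x ^ (p * (j * m - 1) % (m * e)) =
      x ^ (m - p % m) * ∑ i ∈ range e, (x ^ m) ^ i := by
  rcases Nat.eq_zero_or_pos m with rfl | hm₀
  · simp
  have ht : m - p % m < m := Nat.sub_lt hm₀ hp
  rw [← Ico_add_one_right_eq_Icc, sum_Ico_eq_sum_range, Nat.add_sub_cancel, mul_sum]
  calc ∑ k ∈ range e, x ^ (p * ((1 + k) * m - 1) % (m * e))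
      = ∑ k ∈ range e, x ^ (m * ((p * k + (p - p / m - 1)) % e) + (m - p % m)) :=
        sum_congr rfl fun k _ ↦ by
          rw [add_comm 1 k, Nat.mul_add_one_mul_sub_one k hp, Nat.mul_add_mod_mul_of_lt _ _ ht]
    _ = ∑ i ∈ range e, x ^ (m * i + (m - p % m)) :=
        sum_range_mul_add_mod (fun i ↦ x ^ (m * i + (m - p % m))) hcop _
    _ = _ := sum_congr rfl fun i _ ↦ by rw [← pow_mul, ← pow_add, add_comm]

theorem fake_degree_identity_general (m n p : ℕ) (hm : 2 ≤ m) (hn : 2 ≤ n)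
    (hcop : Nat.Coprime p (m * (n - 1))) :
    (X ^ n - 1) * ∑ j ∈ Finset.range m,
        (X : Polynomial ℤ) ^ (j * (n - 1) + (((j : ℤ) - (p : ℤ)) % (m : ℤ)).toNat) =
      (X ^ m - 1) * ((X : Polynomial ℤ) ^ ((p * (n - 1)) % (m * (n - 1))) +
        ∑ j ∈ Finset.Icc 1 (n - 1),
          (X : Polynomial ℤ) ^ ((p * (j * m - 1)) % (m * (n - 1)))) := by
  obtain ⟨e, rfl⟩ : ∃ e, n = e + 1 := ⟨n - 1, by omega⟩
  rw [Nat.add_sub_cancel] at hcop ⊢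
  have hcop_m : p.Coprime m := hcop.coprime_mul_right_right
  have hq : p % m + (m - p % m) = m := Nat.add_sub_of_le (Nat.mod_lt p (by omega)).le
  have hpm : 0 < p % m := Nat.pos_of_ne_zero fun h ↦ by
    have := hcop_m.symm.eq_one_of_dvd (Nat.dvd_of_mod_eq_zero h)
    omega
  have hdvd : m ∣ p + (m - p % m) := ⟨p / m + 1, by
    rw [mul_add_one]
    have := Nat.div_add_mod p m
    omega⟩
  rw [sum_congr rfl fun j _ ↦ by rw [Int.toNat_natCast_sub_emod j hdvd], Nat.mul_mod_mul_right,
    sum_Icc_pow_mul_mul_sub_one_mod X hpm hcop.coprime_mul_left_right]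
  exact pow_succ_sub_one_mul_sum_range_pow_mul_add_mod X hq e

/-- The polynomial identity underlying the computation of the fake degree of the Galois
twist of the reflection representation of `G(m,m,n)`:
`(X^n − 1) · Σ_{j=0}^{m−1} X^{j(n−1)+((j−p) mod m)}
  = (X^m − 1) · (X^{p(n−1) mod m(n−1)} + Σ_{j=1}^{n−1} X^{p(jm−1) mod m(n−1)})` in `ℤ[X]`. -/
theorem fake_degree_identity (m n p : ℕ) (hm : 2 ≤ m) (hn : 2 ≤ n) (hp : 1 ≤ p)
    (hcop : Nat.Coprime p (m * (n - 1))) :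
    (X ^ n - 1) * ∑ j ∈ Finset.range m,
        (X : Polynomial ℤ) ^ (j * (n - 1) + (((j : ℤ) - (p : ℤ)) % (m : ℤ)).toNat) =
      (X ^ m - 1) * ((X : Polynomial ℤ) ^ ((p * (n - 1)) % (m * (n - 1))) +
        ∑ j ∈ Finset.Icc 1 (n - 1),
          (X : Polynomial ℤ) ^ ((p * (j * m - 1)) % (m * (n - 1)))) :=
  fake_degree_identity_general m n p hm hn hcop
end

section
/- Let m ≥ 2, n ≥ 1, and 1 ≤ k ≤ n be integers, and let p be a positive integer coprime to m·n. Set ζ = exp(2πi·p/(m·n)) ∈ ℂ and, for an integer j, set μ_j = exp(2πi·j/m) ∈ ℂ. Then the complex number D = m · (ζ^k − 1) · Π_{j=1}^{n−k} (ζ^{m·j} − 1) is nonzero, and ζ^{k + m·k(k−1)/2} · (ζ^{n−k} − μ_p) · ( Π_{i=k}^{n−1} (ζ^{m·i} − 1) ) · ( Π_{j ∈ {0,…,m−1}, j ≠ p mod m} (ζ^{n} − μ_j) ) / D = (−1)^k. -/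
/-!
Put `ω = ζ ^ m`, a primitive `n`-th root of unity, and `η = ζ ^ n = μ p`. The factors
`η - μ j`, `j ≠ p mod m`, multiply to the derivative of `X ^ m - 1` at `η`, which is
`m * η ^ (m - 1)`, and `ζ ^ (n - k) - η = -ζ ^ (n - k) * (ζ ^ k - 1)`. The reflection
`i ↦ n - i` turns `∏_{i=k}^{n-1} (ω ^ i - 1)` into
`(-1) ^ (n - k) * ω ^ (-C(n - k + 1, 2)) * ∏_{j=1}^{n-k} (ω ^ j - 1)`.
After cancelling, only a power of `ω` is left. Since
`C(n - k + 1, 2) + n k = C(n, 2) + n + C(k, 2)` and `ω ^ C(n, 2)`, the product of all `n`-th roots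
of unity, is `(-1) ^ (n + 1)`, it is the sign `(-1) ^ k`.
-/

open Finset Polynomial

theorem Nat.choose_two_sub_add_one_add_mul {n k : ℕ} (hkn : k ≤ n) :
    (n - k + 1).choose 2 + n * k = n.choose 2 + n + k.choose 2 := by
  obtain ⟨d, rfl⟩ := Nat.exists_eq_add_of_le hkn
  apply Nat.cast_injective (R := ℚ)
  push_cast [Nat.add_sub_cancel_left, Nat.cast_choose_two]
  ring

theorem Finset.sum_Icc_one_id (N : ℕ) : ∑ j ∈ Icc 1 N, j = (N + 1).choose 2 := by
  induction N with
  | zero => rfl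
  | succ N ih =>
    rw [sum_Icc_succ_top (by omega), ih, Nat.choose_succ_succ' (N + 1), Nat.choose_one_right,
      add_comm]

theorem pow_choose_two_mul_prod_Icc_pow_sub_one {R : Type*} [CommRing R] {ω : R} {n k : ℕ}
    (hω : ω ^ n = 1) (hk : 1 ≤ k) (hkn : k ≤ n) :
    ω ^ (n - k + 1).choose 2 * ∏ i ∈ Icc k (n - 1), (ω ^ i - 1) =
      (-1) ^ (n - k) * ∏ j ∈ Icc 1 (n - k), (ω ^ j - 1) := by
  have hreflect : ∏ i ∈ Icc k (n - 1), (ω ^ i - 1) =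
      ∏ j ∈ Icc 1 (n - k), (ω ^ (n - j) - 1) := by
    refine prod_nbij' (n - ·) (n - ·) ?_ ?_ ?_ ?_ ?_ <;> intro i hi <;>
      simp only [mem_Icc] at hi ⊢
    all_goals first | omega | rw [Nat.sub_sub_self (by omega)]
  have hfactor : ∀ j ∈ Icc 1 (n - k), ω ^ j * (ω ^ (n - j) - 1) = -(ω ^ j - 1) := by
    intro j hj
    have : ω ^ j * ω ^ (n - j) = 1 := by
      rw [← pow_add, Nat.add_sub_cancel' (by simp at hj; omega), hω]
    linear_combination this
  rw [hreflect, ← sum_Icc_one_id, ← prod_pow_eq_pow_sum, ← prod_mul_distrib,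
    prod_congr rfl hfactor, prod_neg, Nat.card_Icc, Nat.add_sub_cancel]

namespace IsPrimitiveRoot

section CommRing

variable {R : Type*} [CommRing R] [IsDomain R]

theorem nodal_range_pow {ξ : R} {m : ℕ} (hξ : IsPrimitiveRoot ξ m) (hm : 0 < m) :
    Lagrange.nodal (range m) (ξ ^ ·) = X ^ m - 1 := by
  simpa [Lagrange.nodal] using (X_pow_sub_C_eq_prod hξ hm (one_pow m)).symm

/-- Both sides are the derivative of `X ^ m - 1 = ∏ j < m, (X - ξ ^ j)` at `ξ ^ r`. -/
theorem prod_erase_pow_sub_pow {ξ : R} {m r : ℕ} (hξ : IsPrimitiveRoot ξ m) (hr : r < m) :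
    ∏ j ∈ (range m).erase r, (ξ ^ r - ξ ^ j) = m * (ξ ^ r) ^ (m - 1) := by
  rw [← Lagrange.eval_nodal, ← Lagrange.eval_nodal_derivative_eval_node_eq (mem_range.2 hr),
    hξ.nodal_range_pow (by omega)]
  simp [derivative_X_pow]

/-- Evaluate `X ^ n - 1 = ∏ i < n, (X - ω ^ i)` at `0`. -/
theorem pow_choose_two {ω : R} {n : ℕ} (hω : IsPrimitiveRoot ω n) (hn : 0 < n) :
    ω ^ n.choose 2 = (-1) ^ (n + 1) := by
  have h := congrArg (eval 0) (hω.nodal_range_pow hn)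
  rw [Lagrange.eval_nodal, prod_congr rfl fun i _ => zero_sub (ω ^ i), prod_neg, card_range,
    prod_pow_eq_pow_sum, sum_range_id, ← Nat.choose_two_right] at h
  simp only [eval_sub, eval_pow, eval_X, eval_one, zero_pow hn.ne', zero_sub] at h
  linear_combination
    (-1) ^ n * h - ω ^ n.choose 2 * pow_mul_pow_eq_one n (by ring : (-1 : R) * -1 = 1)

theorem pow_choose_two_sub_add_one {ω : R} {n k : ℕ} (hω : IsPrimitiveRoot ω n) (hn : 0 < n)
    (hkn : k ≤ n) : ω ^ (n - k + 1).choose 2 = (-1) ^ (n + 1) * ω ^ k.choose 2 := by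
  calc ω ^ (n - k + 1).choose 2 = ω ^ ((n - k + 1).choose 2 + n * k) := by
        rw [pow_add, pow_mul, hω.pow_eq_one, one_pow, mul_one]
    _ = ω ^ n.choose 2 * ω ^ n * ω ^ k.choose 2 := by
        rw [Nat.choose_two_sub_add_one_add_mul hkn, pow_add, pow_add]
    _ = (-1) ^ (n + 1) * ω ^ k.choose 2 := by
        rw [hω.pow_choose_two hn, hω.pow_eq_one, mul_one]

end CommRing

end IsPrimitiveRoot

section GenericDegree

variable {K : Type*} [Field K] {ζ : K} {m n k : ℕ}

theorem genericDegree_denom_ne_zero (hm : 1 < m) (hk : 1 ≤ k) (hkn : k ≤ n)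
    (hζ : IsPrimitiveRoot ζ (m * n)) :
    (m : K) * (ζ ^ k - 1) * ∏ j ∈ Icc 1 (n - k), (ζ ^ (m * j) - 1) ≠ 0 := by
  have : NeZero (m * n) := ⟨Nat.mul_ne_zero (by omega) (by omega)⟩
  have hmn : ((m * n : ℕ) : K) ≠ 0 := hζ.neZero'.out
  refine mul_ne_zero (mul_ne_zero (by push_cast at hmn; exact left_ne_zero_of_mul hmn) ?_) ?_
  · exact sub_ne_zero.2 (hζ.pow_ne_one_of_pos_of_lt (by omega) (by nlinarith))
  · refine prod_ne_zero_iff.2 fun j hj => sub_ne_zero.2 ?_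
    simp only [mem_Icc] at hj
    exact hζ.pow_ne_one_of_pos_of_lt (Nat.mul_ne_zero (by omega) (by omega))
      (Nat.mul_lt_mul_of_pos_left (by omega) (by omega))

theorem genericDegree_num_eq_neg_one_pow_mul_denom {ξ : K} {p : ℕ} (hm : 0 < m) (hk : 1 ≤ k)
    (hkn : k ≤ n) (hζ : IsPrimitiveRoot ζ (m * n)) (hξ : IsPrimitiveRoot ξ m)
    (hζn : ζ ^ n = ξ ^ p) :
    ζ ^ (k + m * (k * (k - 1) / 2)) * (ζ ^ (n - k) - ξ ^ p) *
        (∏ i ∈ Icc k (n - 1), (ζ ^ (m * i) - 1)) *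
        (∏ j ∈ (range m).filter (fun j => j ≠ p % m), (ζ ^ n - ξ ^ j)) =
      (-1) ^ k * (m * (ζ ^ k - 1) * ∏ j ∈ Icc 1 (n - k), (ζ ^ (m * j) - 1)) := by
  have hω : IsPrimitiveRoot (ζ ^ m) n := hζ.pow (Nat.mul_pos hm (by omega)) rfl
  have hroots : ∏ j ∈ (range m).filter (fun j => j ≠ p % m), (ζ ^ n - ξ ^ j) =
      m * (ζ ^ n) ^ (m - 1) := by
    rw [filter_ne', hζn, ← pow_mod_orderOf, ← hξ.eq_orderOf,
      hξ.prod_erase_pow_sub_pow (Nat.mod_lt p hm)]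
  have hP := pow_choose_two_mul_prod_Icc_pow_sub_one hω.pow_eq_one hk hkn
  have hS := hω.pow_choose_two_sub_add_one (by omega) hkn
  rw [hroots, ← hζn, ← Nat.choose_two_right]
  simp only [pow_mul ζ m] at hP ⊢
  obtain ⟨d, rfl⟩ := Nat.exists_eq_add_of_le hkn
  rw [Nat.add_sub_cancel_left] at hP hS ⊢
  have hpow :
      ζ ^ (k + m * k.choose 2) * ζ ^ d * (ζ ^ (k + d)) ^ (m - 1) = (ζ ^ m) ^ k.choose 2 := by
    obtain ⟨m', rfl⟩ : ∃ m', m = m' + 1 := ⟨m - 1, by omega⟩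
    have e : k + (m' + 1) * k.choose 2 + d + (k + d) * m' =
        (m' + 1) * k.choose 2 + (m' + 1) * (k + d) := by ring
    rw [Nat.add_sub_cancel, ← pow_mul, ← pow_add, ← pow_add, e, pow_add, hζ.pow_eq_one,
      mul_one, pow_mul]
  apply mul_left_cancel₀ (pow_ne_zero ((d + 1).choose 2) (hω.ne_zero (by omega)))
  calc _ = -(ζ ^ (k + m * k.choose 2) * ζ ^ d * (ζ ^ (k + d)) ^ (m - 1)) * (m * (ζ ^ k - 1)) *
        ((ζ ^ m) ^ (d + 1).choose 2 * ∏ i ∈ Icc k (k + d - 1), ((ζ ^ m) ^ i - 1)) := by ring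
    _ = -(ζ ^ m) ^ k.choose 2 * (m * (ζ ^ k - 1)) *
        ((-1) ^ d * ∏ j ∈ Icc 1 d, ((ζ ^ m) ^ j - 1)) := by rw [hpow, hP]
    _ = _ := by
      rw [hS]
      linear_combination ((ζ ^ m) ^ k.choose 2 * (m * (ζ ^ k - 1)) * (-1) ^ d *
        ∏ j ∈ Icc 1 d, ((ζ ^ m) ^ j - 1)) * pow_mul_pow_eq_one k (by ring : (-1 : K) * -1 = 1)

end GenericDegree

theorem generic_degree_eval_G_m_1_n_general (m n k p : ℕ) (hm : 2 ≤ m)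
    (hk1 : 1 ≤ k) (hkn : k ≤ n) (hcop : Nat.Coprime p (m * n)) :
    let ζ : ℂ := Complex.exp (2 * Real.pi * Complex.I * p / (m * n))
    let μ : ℕ → ℂ := fun j => Complex.exp (2 * Real.pi * Complex.I * j / m)
    let D : ℂ := m * (ζ ^ k - 1) * ∏ j ∈ Finset.Icc 1 (n - k), (ζ ^ (m * j) - 1)
    D ≠ 0 ∧
      ζ ^ (k + m * (k * (k - 1) / 2)) * (ζ ^ (n - k) - μ p) *
          (∏ i ∈ Finset.Icc k (n - 1), (ζ ^ (m * i) - 1)) *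
          (∏ j ∈ (Finset.range m).filter (fun j => j ≠ p % m), (ζ ^ n - μ j)) / D =
        (-1) ^ k := by
  intro ζ μ D
  have hζ : IsPrimitiveRoot ζ (m * n) := by
    convert Complex.isPrimitiveRoot_exp_of_coprime p (m * n)
      (Nat.mul_ne_zero (by omega) (by omega)) hcop using 2
    push_cast
    ring
  set ξ := Complex.exp (2 * Real.pi * Complex.I / m)
  have hξ : IsPrimitiveRoot ξ m := Complex.isPrimitiveRoot_exp m (by omega)
  have hμ : ∀ j : ℕ, μ j = ξ ^ j := fun j => by
    simp only [μ, ξ, ← Complex.exp_nat_mul]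
    ring_nf
  have hζn : ζ ^ n = ξ ^ p := by
    rw [← hμ, ← Complex.exp_nat_mul]
    have hn : (n : ℂ) ≠ 0 := by exact_mod_cast (by omega : n ≠ 0)
    congr 1
    field_simp
  have hD : D ≠ 0 := genericDegree_denom_ne_zero (by omega) hk1 hkn hζ
  refine ⟨hD, (div_eq_iff hD).2 ?_⟩
  simp only [hμ]
  exact genericDegree_num_eq_neg_one_pow_mul_denom (by omega) hk1 hkn hζ hξ hζn

/-- Evaluation of the generic degree of `⋀^k V^{σ_p}` for `G(m,1,n)` at the primitive root
of unity `ζ = ζ_{mn}^p`: the denominator `D = m·(ζ^k − 1)·Π_{j=1}^{n−k}(ζ^{mj} − 1)` is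
nonzero and the quotient equals `(−1)^k`. -/
theorem generic_degree_eval_G_m_1_n (m n k p : ℕ) (hm : 2 ≤ m) (hn : 1 ≤ n)
    (hk1 : 1 ≤ k) (hkn : k ≤ n) (hp : 1 ≤ p) (hcop : Nat.Coprime p (m * n)) :
    let ζ : ℂ := Complex.exp (2 * Real.pi * Complex.I * p / (m * n))
    let μ : ℕ → ℂ := fun j => Complex.exp (2 * Real.pi * Complex.I * j / m)
    let D : ℂ := m * (ζ ^ k - 1) * ∏ j ∈ Finset.Icc 1 (n - k), (ζ ^ (m * j) - 1)
    D ≠ 0 ∧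
      ζ ^ (k + m * (k * (k - 1) / 2)) * (ζ ^ (n - k) - μ p) *
          (∏ i ∈ Finset.Icc k (n - 1), (ζ ^ (m * i) - 1)) *
          (∏ j ∈ (Finset.range m).filter (fun j => j ≠ p % m), (ζ ^ n - μ j)) / D =
        (-1) ^ k :=
  generic_degree_eval_G_m_1_n_general m n k p hm hk1 hkn hcop
end

section
/- Let m ≥ 2, n ≥ 2, and 1 ≤ k ≤ n−1 be integers with (m,n) ≠ (2,2), and let p be a positive integer coprime to m·(n−1). Set ζ = exp(2πi·p/(m·(n−1))) ∈ ℂ and, for an integer j, set μ_j = exp(2πi·j/m) ∈ ℂ. Then the complex number D = m · (ζ^{n−k} − 1) · (ζ^{k−1} − ζ^{k}·μ_p) · (ζ^{k} − 1) · Π_{j=1}^{n−k−1} (ζ^{m·j} − 1) is nonzero, and ζ^{k + m·k(k−1)/2} · (ζ^{n} − 1) · (ζ^{n−k−1} − μ_p) · (ζ^{k−1} − μ_p) · ( Π_{i=k}^{n−2} (ζ^{m·i} − 1) ) · ( Π_{j ∈ {0,…,m−1}, j ≠ p mod m} (ζ^{n−1} − μ_j) ) / D = (−1)^k. -/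
/-! With `x = ζ ^ (n - 1) = μ p`, every factor of the numerator except the last two is, up to a
sign and a power of `ζ`, a factor of `D`: `ζ ^ a - x = -ζ ^ a * (ζ ^ (n - 1 - a) - 1)`, and
`ζ ^ (m * i) - 1 = -ζ ^ (m * i) * (ζ ^ (m * (n - 1 - i)) - 1)` reflects the product over
`k ≤ i ≤ n - 2` onto the one over `1 ≤ j ≤ n - k - 1`. The product over `j ≠ p` is the derivative
of `X ^ m - 1` at `x`, i.e. `m * x ^ (m - 1)`. The leftover power of `ζ` is, since
`k * (k - 1) / 2 = ∑ i < k, i`, the product of all `(n - 1)`-st roots of unity `(ζ ^ m) ^ i`, which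
is `(-1) ^ n`; the signs then combine to `(-1) ^ k`. -/

open Finset

namespace IsPrimitiveRoot

open Polynomial

variable {R : Type*} [CommRing R] [IsDomain R] {ω : R} {N : ℕ}

theorem nodal_range_pow_s6 (hω : IsPrimitiveRoot ω N) (hN : 0 < N) :
    Lagrange.nodal (range N) (ω ^ ·) = X ^ N - 1 := by
  simpa [Lagrange.nodal] using (X_pow_sub_C_eq_prod hω hN (one_pow N)).symm

theorem prod_range_pow (hω : IsPrimitiveRoot ω N) (hN : 0 < N) :
    ∏ i ∈ range N, ω ^ i = (-1) ^ (N + 1) := by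
  have h := congrArg (eval 0) (hω.nodal_range_pow_s6 hN)
  rw [Lagrange.eval_nodal] at h
  simp only [zero_sub, prod_neg, card_range, eval_sub, eval_pow, eval_X, eval_one,
    zero_pow hN.ne'] at h
  calc ∏ i ∈ range N, ω ^ i = (-1) ^ N * ((-1) ^ N * ∏ i ∈ range N, ω ^ i) := by
        rw [← mul_assoc, ← pow_add, ← two_mul, pow_mul]; simp
    _ = (-1) ^ (N + 1) := by rw [h, pow_succ]

theorem prod_erase_sub_pow (hω : IsPrimitiveRoot ω N) {r : ℕ} (hr : r < N) :
    ∏ j ∈ (range N).erase r, (ω ^ r - ω ^ j) = N * (ω ^ r) ^ (N - 1) := by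
  have h := Lagrange.eval_nodal_derivative_eval_node_eq (s := range N) (v := (ω ^ ·))
    (mem_range.2 hr)
  rw [hω.nodal_range_pow_s6 (by omega), Lagrange.eval_nodal] at h
  simpa [derivative_X_pow] using h.symm

end IsPrimitiveRoot

section CommRing

variable {R : Type*} [CommRing R]

theorem prod_Icc_pow_sub_one_eq_of_pow_eq_one {ω : R} {N : ℕ} (hω : ω ^ N = 1) (hN : 0 < N)
    (k : ℕ) :
    ∏ i ∈ Icc k (N - 1), (ω ^ i - 1) =
      (∏ i ∈ Icc k (N - 1), -ω ^ i) * ∏ j ∈ Icc 1 (N - k), (ω ^ j - 1) := by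
  have h_reflect : ∏ j ∈ Icc 1 (N - k), (ω ^ j - 1) = ∏ i ∈ Icc k (N - 1), (ω ^ (N - i) - 1) :=
    prod_nbij' (N - ·) (N - ·) (by intro; simp; omega) (by intro; simp; omega)
      (by intro; simp; omega) (by intro; simp; omega)
      fun a ha => by rw [mem_Icc] at ha; rw [Nat.sub_sub_self (by omega)]
  rw [h_reflect, ← prod_mul_distrib]
  refine prod_congr rfl fun i hi => ?_
  have h_inv : ω ^ i * ω ^ (N - i) = 1 := by
    rw [← pow_add, Nat.add_sub_cancel' (by rw [mem_Icc] at hi; omega), hω]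
  linear_combination h_inv

theorem pow_pred_sub_pow_mul_pow_pred (ζ : R) {k n : ℕ} (hk : 1 ≤ k) (hn : 1 ≤ n) :
    ζ ^ (k - 1) - ζ ^ k * ζ ^ (n - 1) = -(ζ ^ (k - 1) * (ζ ^ n - 1)) := by
  obtain ⟨k, rfl⟩ := Nat.exists_eq_add_of_le' hk
  obtain ⟨n, rfl⟩ := Nat.exists_eq_add_of_le' hn
  simp only [Nat.add_sub_cancel]
  ring

end CommRing

section GenericDegree

variable {K : Type*} [Field K] {m n k p : ℕ} {ζ η : K} {μ : ℕ → K}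

theorem generic_degree_denominator_ne_zero (hm : 2 ≤ m) (hn : 2 ≤ n) (hk1 : 1 ≤ k)
    (hkn : k ≤ n - 1) (hmn : ¬(m = 2 ∧ n = 2)) (hζ : IsPrimitiveRoot ζ (m * (n - 1)))
    (hη : IsPrimitiveRoot η m) (hμ : ∀ j, μ j = η ^ j) (hζη : ζ ^ (n - 1) = η ^ p) :
    (m : K) * (ζ ^ (n - k) - 1) * (ζ ^ (k - 1) - ζ ^ k * μ p) * (ζ ^ k - 1) *
      ∏ j ∈ Icc 1 (n - k - 1), (ζ ^ (m * j) - 1) ≠ 0 := by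
  have h_ne_one {l : ℕ} (h0 : l ≠ 0) (hl : l < m * (n - 1)) : ζ ^ l - 1 ≠ 0 :=
    sub_ne_zero.2 (hζ.pow_ne_one_of_pos_of_lt h0 hl)
  have hm0 : (m : K) ≠ 0 := by
    have : NeZero m := ⟨by omega⟩
    exact (hη.neZero').out
  have h_two : 2 * (n - 1) ≤ m * (n - 1) := Nat.mul_le_mul_right _ hm
  have hn_lt : n < m * (n - 1) := by
    rcases (show n = 2 ∨ 3 ≤ n by omega) with rfl | h3
    · have : 3 * (2 - 1) ≤ m * (2 - 1) := Nat.mul_le_mul_right _ (by omega)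
      omega
    · omega
  have h_mid : ζ ^ (k - 1) - ζ ^ k * μ p ≠ 0 := by
    rw [hμ, ← hζη, pow_pred_sub_pow_mul_pow_pred ζ hk1 (by omega), neg_ne_zero]
    exact mul_ne_zero (pow_ne_zero _ (hζ.ne_zero (by omega))) (h_ne_one (by omega) hn_lt)
  refine mul_ne_zero (mul_ne_zero (mul_ne_zero (mul_ne_zero hm0 ?_) h_mid) ?_) ?_
  · exact h_ne_one (by omega) (by omega)
  · exact h_ne_one (by omega) (by omega)
  · refine prod_ne_zero_iff.2 fun j hj => ?_
    rw [mem_Icc] at hj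
    exact h_ne_one (Nat.mul_ne_zero (by omega) (by omega))
      (Nat.mul_lt_mul_of_pos_left (by omega) (by omega))

theorem generic_degree_numerator_eq (hm : 0 < m) (hn : 2 ≤ n) (hk1 : 1 ≤ k) (hkn : k ≤ n - 1)
    (hζ : IsPrimitiveRoot ζ (m * (n - 1))) (hη : IsPrimitiveRoot η m)
    (hμ : ∀ j, μ j = η ^ j) (hζη : ζ ^ (n - 1) = η ^ p) :
    ζ ^ (k + m * (k * (k - 1) / 2)) * (ζ ^ n - 1) * (ζ ^ (n - k - 1) - μ p) *
        (ζ ^ (k - 1) - μ p) * (∏ i ∈ Icc k (n - 2), (ζ ^ (m * i) - 1)) *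
        (∏ j ∈ (range m).filter (fun j => j ≠ p % m), (ζ ^ (n - 1) - μ j)) =
      (-1) ^ k * ((m : K) * (ζ ^ (n - k) - 1) * (ζ ^ (k - 1) - ζ ^ k * μ p) * (ζ ^ k - 1) *
        ∏ j ∈ Icc 1 (n - k - 1), (ζ ^ (m * j) - 1)) := by
  set ω := ζ ^ m
  have hω : IsPrimitiveRoot ω (n - 1) := hζ.pow (Nat.mul_pos hm (by omega)) rfl
  have hμp : μ p = ζ ^ (n - 1) := by rw [hμ, hζη]
  have h_roots : ∏ j ∈ (range m).filter (fun j => j ≠ p % m), (ζ ^ (n - 1) - μ j) =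
      m * (ζ ^ (n - 1)) ^ (m - 1) := by
    have hη_mod : η ^ p = η ^ (p % m) := by rw [hη.eq_orderOf, pow_mod_orderOf]
    simp only [filter_ne', hμ, hζη, hη_mod]
    exact hη.prod_erase_sub_pow (Nat.mod_lt p hm)
  have h_reflect : ∏ i ∈ Icc k (n - 2), (ζ ^ (m * i) - 1) =
      (-1) ^ (n - 1 - k) * (∏ i ∈ Icc k (n - 2), ω ^ i) *
        ∏ j ∈ Icc 1 (n - k - 1), (ζ ^ (m * j) - 1) := by
    simp only [pow_mul]
    rw [show n - 2 = n - 1 - 1 by omega, show n - k - 1 = n - 1 - k by omega,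
      prod_Icc_pow_sub_one_eq_of_pow_eq_one hω.pow_eq_one (by omega), prod_neg, Nat.card_Icc]
    congr 3; omega
  have h_powers : ω ^ (k * (k - 1) / 2) * ∏ i ∈ Icc k (n - 2), ω ^ i = (-1) ^ n := by
    rw [← sum_range_id, ← prod_pow_eq_pow_sum, ← Ico_add_one_right_eq_Icc,
      prod_range_mul_prod_Ico _ (by omega), show n - 2 + 1 = n - 1 by omega,
      hω.prod_range_pow (by omega), show n - 1 + 1 = n by omega]
  have h_unit : ζ ^ k * ζ ^ (n - k - 1) * (ζ ^ (n - 1)) ^ (m - 1) = 1 := by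
    rw [← pow_add, show k + (n - k - 1) = n - 1 by omega, ← pow_succ', Nat.sub_add_cancel hm,
      ← pow_mul, mul_comm, hζ.pow_eq_one]
  have h_sign : (-1 : K) ^ n * (-1) ^ (n - 1 - k) = -(-1) ^ k := by
    rw [← pow_add, show n + (n - 1 - k) = k + 1 + 2 * (n - 1 - k) by omega, pow_add, pow_mul]
    simp [pow_succ]
  have h_left : ζ ^ (n - k - 1) - ζ ^ (n - 1) = -(ζ ^ (n - k - 1) * (ζ ^ k - 1)) := by
    have : ζ ^ (n - k - 1) * ζ ^ k = ζ ^ (n - 1) := by rw [← pow_add]; congr 1; omega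
    linear_combination this
  have h_right : ζ ^ (k - 1) - ζ ^ (n - 1) = -(ζ ^ (k - 1) * (ζ ^ (n - k) - 1)) := by
    have : ζ ^ (k - 1) * ζ ^ (n - k) = ζ ^ (n - 1) := by rw [← pow_add]; congr 1; omega
    linear_combination this
  rw [hμp, h_roots, h_reflect, h_left, h_right, pow_add, pow_mul,
    pow_pred_sub_pow_mul_pow_pred ζ hk1 (by omega)]
  linear_combination (m * ζ ^ (k - 1) * (ζ ^ n - 1) * (ζ ^ k - 1) * (ζ ^ (n - k) - 1) *
      ∏ j ∈ Icc 1 (n - k - 1), (ζ ^ (m * j) - 1)) *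
    ((-1) ^ (n - 1 - k) * (ω ^ (k * (k - 1) / 2) * ∏ i ∈ Icc k (n - 2), ω ^ i) * h_unit +
      (-1) ^ (n - 1 - k) * h_powers + h_sign)

end GenericDegree

open Complex

theorem generic_degree_eval_G_m_m_n_general (m n k p : ℕ) (hm : 2 ≤ m) (hn : 2 ≤ n)
    (hk1 : 1 ≤ k) (hkn : k ≤ n - 1) (hmn : ¬(m = 2 ∧ n = 2))
    (hcop : Nat.Coprime p (m * (n - 1))) :
    let ζ : ℂ := Complex.exp (2 * Real.pi * Complex.I * p / (m * (n - 1)))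
    let μ : ℕ → ℂ := fun j => Complex.exp (2 * Real.pi * Complex.I * j / m)
    let D : ℂ := m * (ζ ^ (n - k) - 1) * (ζ ^ (k - 1) - ζ ^ k * μ p) * (ζ ^ k - 1) *
      ∏ j ∈ Finset.Icc 1 (n - k - 1), (ζ ^ (m * j) - 1)
    D ≠ 0 ∧
      ζ ^ (k + m * (k * (k - 1) / 2)) * (ζ ^ n - 1) * (ζ ^ (n - k - 1) - μ p) *
          (ζ ^ (k - 1) - μ p) *
          (∏ i ∈ Finset.Icc k (n - 2), (ζ ^ (m * i) - 1)) *
          (∏ j ∈ (Finset.range m).filter (fun j => j ≠ p % m), (ζ ^ (n - 1) - μ j)) / D =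
        (-1) ^ k := by
  intro ζ μ D
  have hζ : IsPrimitiveRoot ζ (m * (n - 1)) := by
    convert isPrimitiveRoot_exp_of_coprime p _ (Nat.mul_ne_zero (by omega) (by omega)) hcop
      using 2
    push_cast [Nat.cast_sub (by omega : 1 ≤ n)]
    ring
  have hη := isPrimitiveRoot_exp m (by omega)
  have hμ (j : ℕ) : μ j = exp (2 * Real.pi * I / m) ^ j := by
    rw [← exp_nat_mul]
    exact congrArg exp (by ring)
  have hζη : ζ ^ (n - 1) = exp (2 * Real.pi * I / m) ^ p := by
    have hn1 : ((n - 1 : ℕ) : ℂ) ≠ 0 := by exact_mod_cast (by omega : n - 1 ≠ 0)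
    rw [← exp_nat_mul, ← exp_nat_mul]
    congr 1
    push_cast [Nat.cast_sub (by omega : 1 ≤ n)] at hn1 ⊢
    field_simp
  have hD : D ≠ 0 := generic_degree_denominator_ne_zero hm hn hk1 hkn hmn hζ hη hμ hζη
  exact ⟨hD, (div_eq_iff hD).2
    (generic_degree_numerator_eq (by omega) hn hk1 hkn hζ hη hμ hζη)⟩

/-- Evaluation of Malle's generic degree of `⋀^k V^{σ_p}` for `G(m,m,n)` (with
`(m,n) ≠ (2,2)`) at the primitive root of unity `ζ = ζ_{m(n−1)}^p`: the denominator
`D = m·(ζ^{n−k} − 1)·(ζ^{k−1} − ζ^k μ_p)·(ζ^k − 1)·Π_{j=1}^{n−k−1}(ζ^{mj} − 1)` is nonzero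
and the quotient equals `(−1)^k`. -/
theorem generic_degree_eval_G_m_m_n (m n k p : ℕ) (hm : 2 ≤ m) (hn : 2 ≤ n)
    (hk1 : 1 ≤ k) (hkn : k ≤ n - 1) (hmn : ¬(m = 2 ∧ n = 2)) (hp : 1 ≤ p)
    (hcop : Nat.Coprime p (m * (n - 1))) :
    let ζ : ℂ := Complex.exp (2 * Real.pi * Complex.I * p / (m * (n - 1)))
    let μ : ℕ → ℂ := fun j => Complex.exp (2 * Real.pi * Complex.I * j / m)
    let D : ℂ := m * (ζ ^ (n - k) - 1) * (ζ ^ (k - 1) - ζ ^ k * μ p) * (ζ ^ k - 1) *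
      ∏ j ∈ Finset.Icc 1 (n - k - 1), (ζ ^ (m * j) - 1)
    D ≠ 0 ∧
      ζ ^ (k + m * (k * (k - 1) / 2)) * (ζ ^ n - 1) * (ζ ^ (n - k - 1) - μ p) *
          (ζ ^ (k - 1) - μ p) *
          (∏ i ∈ Finset.Icc k (n - 2), (ζ ^ (m * i) - 1)) *
          (∏ j ∈ (Finset.range m).filter (fun j => j ≠ p % m), (ζ ^ (n - 1) - μ j)) / D =
        (-1) ^ k :=
  generic_degree_eval_G_m_m_n_general m n k p hm hn hk1 hkn hmn hcop
end

section
/- Let m ≥ 2 and n ≥ 1 be integers, let p be a positive integer coprime to m·n, and set ζ = exp(2πi·p/(m·n)) ∈ ℂ. Let λ = (λ^{(0)}, …, λ^{(m−1)}) be an m-tuple of integer partitions with |λ^{(0)}| + ⋯ + |λ^{(m−1)}| = n. For s = 0,…,m−1 put Q_s = ζ if s = 0 and Q_s = exp(2πi·s/m) if 1 ≤ s ≤ m−1. For partitions α, β, a cell of α is a pair (i,j) with i ≥ 1 and 1 ≤ j ≤ α_i, the conjugate is β′_j = #{ i ≥ 1 : β_i ≥ j }, and the generalized hook number is h^{α,β}_{i,j}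 = α_i − i + β′_j − j + 1 ∈ ℤ. Then Π_{s=0}^{m−1} Π_{(i,j) cell of λ^{(s)}} Π_{t=0}^{m−1} ( ζ^{h^{λ^{(s)},λ^{(t)}}_{i,j}} · Q_s · Q_t^{−1} − 1 ) = 0 (with ζ^h the integer power of the nonzero complex number ζ) if and only if there exists k with 0 ≤ k ≤ n such that λ^{(0)} is the one-part partition (n−k) (the empty partition if k = n), λ^{(p mod m)} is the partition (1^k) with k parts equal to 1 (the empty partition if k = 0), and λ^{(s)} is the empty partition for every other index s. -/
/-!
Put `ω = exp (2πi / mn)`. Then `ζ = ω ^ p` and `Q_s = ω ^ b_s` with `b_0 = p` and `b_s = n s`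
otherwise, so a factor vanishes iff `mn ∣ h p + b_s - b_t`, `h` the generalized hook number.
For `s = t` we have `1 ≤ h < mn`, which coprimality of `p` and `mn` excludes. For `s ≠ t`,
`|λ^{(s)}| + |λ^{(t)}| ≤ n` confines `h` to `[1 - n, n - 1]`, and reducing modulo `n` forces
`h + [s = 0] - [t = 0] ∈ {-n, 0, n}`. The value `0` would give `s ≡ t (mod m)`; the values `±n` pin
`h` to an endpoint of its range, which is attained only by a row `(n - k)` in slot `0` against a
column `(1^k)`, where reducing modulo `m` puts the column in slot `p mod m`.
-/

/-- The `i`-th part (`1`-indexed) of a partition presented as a (weakly decreasing)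
list of its positive parts; parts beyond the length are `0`. -/
def partOf (l : List ℕ) (i : ℕ) : ℕ := l.getD (i - 1) 0

/-- The `j`-th part of the conjugate partition: the number of parts that are `≥ j`. -/
def conjOf (l : List ℕ) (j : ℕ) : ℕ := (l.filter (fun x => j ≤ x)).length

/-- The generalized hook number `h^{α,β}_{i,j} = α_i − i + β′_j − j + 1`. -/
def hookNum (α β : List ℕ) (i j : ℕ) : ℤ :=
  (partOf α i : ℤ) - (i : ℤ) + (conjOf β j : ℤ) - (j : ℤ) + 1

/-- The product of `F i j` over all cells `(i,j)` (with `i ≥ 1`, `1 ≤ j ≤ α_i`)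
of the partition `α`, presented as a list of its parts. -/
noncomputable def cellProd (α : List ℕ) (F : ℕ → ℕ → ℂ) : ℂ :=
  ∏ i ∈ Finset.range α.length, ∏ j ∈ Finset.Icc 1 (partOf α (i + 1)), F (i + 1) j


open Finset

def IsCell (α : List ℕ) (i j : ℕ) : Prop := 1 ≤ i ∧ 1 ≤ j ∧ j ≤ partOf α i

namespace List

variable {l : List ℕ}

theorem eq_nil_of_sum_eq_zero_of_pos (hpos : ∀ x ∈ l, 0 < x) (h : l.sum = 0) : l = [] :=
  eq_nil_iff_forall_not_mem.2 fun x hx => (hpos x hx).ne' (sum_eq_zero_iff.1 h x hx)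

theorem eq_replicate_one_of_sum_eq_length (hpos : ∀ x ∈ l, 0 < x) (h : l.sum = l.length) :
    l = replicate l.length 1 := by
  induction l with
  | nil => rfl
  | cons a t ih =>
    simp only [forall_mem_cons] at hpos
    have := length_le_sum_of_one_le t hpos.2
    simp only [sum_cons, length_cons] at h
    rw [length_cons, replicate_succ, ← ih hpos.2 (by omega), show a = 1 by omega]

theorem eq_singleton_sum_of_partOf_one_eq_sum (hpos : ∀ x ∈ l, 0 < x) (hne : l ≠ [])
    (h : partOf l 1 = l.sum) : l = [l.sum] := by
  cases l with
  | nil => exact absurd rfl hne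
  | cons a t =>
    simp only [forall_mem_cons] at hpos
    have ht : t = [] := eq_nil_of_sum_eq_zero_of_pos hpos.2 (by simp [partOf] at h; omega)
    simp [ht]

end List

variable {α β : List ℕ} {i j : ℕ}

theorem IsCell.le_length (hc : IsCell α i j) : i ≤ α.length := by
  obtain ⟨-, hj, hji⟩ := hc
  by_contra! h
  have : partOf α i = 0 := List.getD_eq_default α 0 (n := i - 1) (by omega)
  omega

theorem IsCell.sub_one_lt_length (hc : IsCell α i j) : i - 1 < α.length := by
  have := hc.le_length
  have := hc.1
  omega

theorem IsCell.partOf_eq_getElem (hc : IsCell α i j) :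
    partOf α i = α[i - 1]'hc.sub_one_lt_length :=
  List.getD_eq_getElem _ _ _

theorem conjOf_one (hpos : ∀ x ∈ α, 0 < x) : conjOf α 1 = α.length := by
  rw [conjOf, List.filter_eq_self.2 fun x hx => by
    simpa [Nat.one_le_iff_ne_zero] using (hpos x hx).ne']

theorem IsCell.partOf_add_le_sum (hpos : ∀ x ∈ α, 0 < x) (hc : IsCell α i j) :
    partOf α i + (i - 1) ≤ α.sum := by
  have hlt := hc.sub_one_lt_length
  have htake := List.length_le_sum_of_one_le (α.take (i - 1))
    fun x hx => hpos x (List.mem_of_mem_take hx)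
  rw [List.length_take, min_eq_left hlt.le] at htake
  rw [← List.sum_take_add_sum_drop α (i - 1), List.drop_eq_getElem_cons hlt, List.sum_cons,
    hc.partOf_eq_getElem]
  omega

theorem IsCell.le_conjOf (hsort : α.Pairwise (· ≥ ·)) (hc : IsCell α i j) : i ≤ conjOf α j := by
  have hlt := hc.sub_one_lt_length
  have hfilter : (α.take i).filter (fun x => j ≤ x) = α.take i := by
    refine List.filter_eq_self.2 fun x hx => ?_
    obtain ⟨k, hk, rfl⟩ := List.mem_take_iff_getElem.1 hx
    have hki : k ≤ i - 1 := by omega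
    have : α[i - 1] ≤ α[k] := by
      rcases hki.eq_or_lt with h | h
      · simp [h]
      · exact List.pairwise_iff_getElem.1 hsort k (i - 1) _ hlt h
    simpa using hc.2.2.trans (hc.partOf_eq_getElem ▸ this)
  have := ((List.take_sublist i α).filter (fun x => j ≤ x)).length_le
  rw [hfilter, List.length_take, min_eq_left (by omega)] at this
  exact this

theorem one_le_hookNum_self (hsort : α.Pairwise (· ≥ ·)) (hc : IsCell α i j) :
    1 ≤ hookNum α α i j := by
  have := hc.le_conjOf hsort
  obtain ⟨-, -, hji⟩ := hc
  unfold hookNum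
  omega

theorem hookNum_le (hα : ∀ x ∈ α, 0 < x) (hβ : ∀ x ∈ β, 0 < x) (hc : IsCell α i j) :
    hookNum α β i j ≤ α.sum + β.sum - 1 := by
  have := hc.partOf_add_le_sum hα
  have := (List.length_filter_le (fun x => j ≤ x) β).trans (List.length_le_sum_of_one_le β hβ)
  obtain ⟨hi, hj, -⟩ := hc
  unfold hookNum conjOf
  omega

theorem eq_singleton_and_eq_replicate_of_hookNum_eq (hα : ∀ x ∈ α, 0 < x)
    (hβ : ∀ x ∈ β, 0 < x) (hc : IsCell α i j) (h : hookNum α β i j = α.sum + β.sum - 1) :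
    α = [α.sum] ∧ β = List.replicate β.sum 1 := by
  have hpart := hc.partOf_add_le_sum hα
  have hconj := List.length_filter_le (fun x => j ≤ x) β
  have hlen := List.length_le_sum_of_one_le β hβ
  have hne : α ≠ [] := List.ne_nil_of_length_pos (by have := hc.sub_one_lt_length; omega)
  obtain ⟨hi, hj, -⟩ := hc
  unfold hookNum conjOf at h
  obtain ⟨rfl, rfl⟩ : i = 1 ∧ j = 1 := by omega
  have hβlen : β.sum = β.length := by rw [← conjOf_one hβ, conjOf]; omega
  refine ⟨List.eq_singleton_sum_of_partOf_one_eq_sum hα hne (by omega), ?_⟩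
  rw [hβlen]
  exact List.eq_replicate_one_of_sum_eq_length hβ hβlen

theorem one_sub_sum_le_hookNum (hα : ∀ x ∈ α, 0 < x) (hc : IsCell α i j) :
    1 - (α.sum : ℤ) ≤ hookNum α β i j := by
  have := hc.le_length
  have := List.length_le_sum_of_one_le α hα
  obtain ⟨-, -, hji⟩ := hc
  unfold hookNum
  omega

theorem eq_replicate_of_hookNum_eq (hα : ∀ x ∈ α, 0 < x) (hc : IsCell α i j)
    (h : hookNum α β i j = 1 - α.sum) : α = List.replicate α.sum 1 := by
  have := hc.le_length
  have hlen := List.length_le_sum_of_one_le α hα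
  obtain ⟨-, -, hji⟩ := hc
  unfold hookNum at h
  have hαlen : α.sum = α.length := by omega
  rw [hαlen]
  exact List.eq_replicate_one_of_sum_eq_length hα hαlen

/-- `Q_s = ζ_{mn} ^ rootExponent n p s`, where `ζ = ζ_{mn} ^ p`. -/
def rootExponent (n p s : ℕ) : ℕ := if s = 0 then p else n * s

theorem Nat.eq_mod_of_lt_of_dvd_sub {m p t : ℕ} (ht : t < m) (h : (m : ℤ) ∣ p - t) : t = p % m := by
  rw [← Nat.mod_eq_of_lt ht]
  exact Nat.modEq_iff_dvd.2 h

theorem Nat.eq_of_lt_of_dvd_sub {m s t : ℕ} (hs : s < m) (ht : t < m) (h : (m : ℤ) ∣ s - t) :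
    s = t := by
  have := Int.eq_zero_of_abs_lt_dvd h (by rw [abs_lt]; omega)
  omega

theorem rootExponent_extremal_of_dvd {m n p s t : ℕ} (hcop : p.Coprime n) (hs : s < m)
    (ht : t < m) (hst : s ≠ t) {H : ℤ} (hlo : 1 - (n : ℤ) ≤ H) (hhi : H ≤ n - 1)
    (hdvd : ((m * n : ℕ) : ℤ) ∣ H * p + rootExponent n p s - rootExponent n p t) :
    (s = 0 ∧ t = p % m ∧ H = n - 1) ∨ (t = 0 ∧ s = p % m ∧ H = 1 - n) := by
  set δ : ℕ → ℤ := fun u => if u = 0 then 1 else 0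
  have hδ : ∀ u, (u = 0 ∧ δ u = 1) ∨ (u ≠ 0 ∧ δ u = 0) := fun u => by
    by_cases u = 0 <;> simp_all [δ]
  have hexp : ∀ u, (rootExponent n p u : ℤ) = δ u * p + n * u := fun u => by
    by_cases hu : u = 0 <;> simp [rootExponent, δ, hu]
  rw [hexp, hexp] at hdvd
  -- reducing modulo `n` leaves `(H + δ s - δ t) * p`, and `p` is a unit mod `n`
  obtain ⟨e, he⟩ : (n : ℤ) ∣ H + δ s - δ t := by
    refine (Nat.Coprime.isCoprime hcop.symm).dvd_of_dvd_mul_right ?_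
    have := (Dvd.intro_left _ (Nat.cast_mul m n).symm).trans hdvd
    convert dvd_sub this (dvd_mul_right (n : ℤ) (s - t)) using 1
    ring
  have hn : (0 : ℤ) < n := by omega
  have hme : (m : ℤ) ∣ e * p + s - t := by
    have hprod : (e * p + s - t) * n = H * p + (δ s * p + n * s) - (δ t * p + n * t) := by
      linear_combination (-p : ℤ) * he
    rwa [← mul_dvd_mul_iff_right hn.ne', hprod, ← Nat.cast_mul]
  have hne : -(n : ℤ) ≤ n * e ∧ n * e ≤ n := by
    rcases hδ s with ⟨-, hs'⟩ | ⟨-, hs'⟩ <;> rcases hδ t with ⟨-, ht'⟩ | ⟨-, ht'⟩ <;> omega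
  obtain rfl | rfl | rfl : e = -1 ∨ e = 0 ∨ e = 1 := by
    have : -1 ≤ e ∧ e ≤ 1 := by constructor <;> nlinarith
    omega
  · rcases hδ s with ⟨-, hs'⟩ | ⟨-, hs'⟩ <;> rcases hδ t with ⟨rfl, ht'⟩ | ⟨-, ht'⟩ <;> try omega
    refine .inr ⟨rfl, Nat.eq_mod_of_lt_of_dvd_sub hs ?_, by omega⟩
    rw [show (p : ℤ) - s = -(-1 * p + s - ((0 : ℕ) : ℤ)) by push_cast; ring]
    exact dvd_neg.2 hme
  · exact absurd (Nat.eq_of_lt_of_dvd_sub hs ht (by simpa using hme)) hst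
  · rcases hδ s with ⟨rfl, hs'⟩ | ⟨-, hs'⟩ <;> rcases hδ t with ⟨-, ht'⟩ | ⟨-, ht'⟩ <;> try omega
    refine .inl ⟨rfl, Nat.eq_mod_of_lt_of_dvd_sub ht ?_, by omega⟩
    simpa using hme

theorem Finset.eq_zero_of_sum_le_add {ι : Type*} [DecidableEq ι] {f : ι → ℕ} {S : Finset ι}
    {u v w : ι} (hu : u ∈ S) (hv : v ∈ S) (hw : w ∈ S) (huv : u ≠ v) (hwu : w ≠ u) (hwv : w ≠ v)
    (h : ∑ x ∈ S, f x ≤ f u + f v) : f w = 0 := by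
  have := add_le_sum (f := f) (fun _ _ => Nat.zero_le _) (mem_erase.2 ⟨hwu.symm, hu⟩)
    (mem_erase.2 ⟨hwv.symm, hv⟩) huv
  have := add_sum_erase S f hw
  omega

theorem cellProd_eq_zero_iff {F : ℕ → ℕ → ℂ} :
    cellProd α F = 0 ↔ ∃ i j, IsCell α i j ∧ F i j = 0 := by
  simp only [cellProd, prod_eq_zero_iff, mem_range, mem_Icc]
  constructor
  · rintro ⟨i, -, j, ⟨hj, hji⟩, hF⟩
    exact ⟨i + 1, j, ⟨by omega, hj, hji⟩, hF⟩
  · rintro ⟨i, j, hc, hF⟩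
    have hlen := hc.le_length
    obtain ⟨hi, hj, hji⟩ := hc
    obtain ⟨i, rfl⟩ : ∃ i', i = i' + 1 := ⟨i - 1, by omega⟩
    exact ⟨i, by omega, j, ⟨hj, hji⟩, hF⟩

theorem IsPrimitiveRoot.pow_zpow_mul_pow_mul_inv_pow_sub_one_eq_zero_iff {K : Type*} [Field K]
    {ω : K} {M : ℕ} (hω : IsPrimitiveRoot ω M) (hM : M ≠ 0) (H : ℤ) (p a b : ℕ) :
    (ω ^ p) ^ H * ω ^ a * (ω ^ b)⁻¹ - 1 = 0 ↔ (M : ℤ) ∣ H * p + a - b := by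
  have hω0 := hω.ne_zero hM
  rw [sub_eq_zero, ← hω.zpow_eq_one_iff_dvd, zpow_sub₀ hω0, zpow_add₀ hω0, mul_comm H,
    zpow_mul]
  simp only [zpow_natCast, div_eq_mul_inv]

section Multipartition

variable {m n p : ℕ} {Λ : ℕ → List ℕ}

theorem eq_nil_of_sum_add_sum_eq (hpos : ∀ s < m, ∀ x ∈ Λ s, 0 < x)
    (hsize : ∑ s ∈ range m, (Λ s).sum = n) {u v : ℕ} (hu : u < m) (hv : v < m) (huv : u ≠ v)
    (h : (Λ u).sum + (Λ v).sum = n) : ∀ w < m, w ≠ u → w ≠ v → Λ w = [] :=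
  fun w hw hwu hwv => List.eq_nil_of_sum_eq_zero_of_pos (hpos w hw) <|
    eq_zero_of_sum_le_add (f := fun s => (Λ s).sum) (mem_range.2 hu) (mem_range.2 hv)
      (mem_range.2 hw) huv hwu hwv (by omega)

theorem exists_shape_of_dvd (hm : 2 ≤ m) (hcop : p.Coprime (m * n))
    (hsort : ∀ s < m, (Λ s).Pairwise (· ≥ ·)) (hpos : ∀ s < m, ∀ x ∈ Λ s, 0 < x)
    (hsize : ∑ s ∈ range m, (Λ s).sum = n) {s t i j : ℕ} (hs : s < m) (ht : t < m)
    (hc : IsCell (Λ s) i j)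
    (hdvd : ((m * n : ℕ) : ℤ) ∣
      hookNum (Λ s) (Λ t) i j * p + rootExponent n p s - rootExponent n p t) :
    ∃ k ≤ n, Λ 0 = (if k = n then [] else [n - k]) ∧ Λ (p % m) = List.replicate k 1 ∧
      ∀ s < m, s ≠ 0 → s ≠ p % m → Λ s = [] := by
  obtain rfl | hst := eq_or_ne s t
  · exfalso
    have hle : (Λ s).sum ≤ n :=
      hsize ▸ single_le_sum (f := fun s => (Λ s).sum) (fun _ _ => Nat.zero_le _) (mem_range.2 hs)
    have hH := hookNum_le (hpos s hs) (hpos s hs) hc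
    have hdvdH : ((m * n : ℕ) : ℤ) ∣ hookNum (Λ s) (Λ s) i j :=
      (Nat.Coprime.isCoprime hcop.symm).dvd_of_dvd_mul_right (by simpa using hdvd)
    have := Int.le_of_dvd (by linarith [one_le_hookNum_self (hsort s hs) hc]) hdvdH
    have h2n : 2 * n ≤ m * n := Nat.mul_le_mul_right n hm
    push_cast at this
    omega
  have hpair : (Λ s).sum + (Λ t).sum ≤ n := hsize ▸ add_le_sum (f := fun s => (Λ s).sum)
    (fun _ _ => Nat.zero_le _) (mem_range.2 hs) (mem_range.2 ht) hst
  have hlo := one_sub_sum_le_hookNum (β := Λ t) (hpos s hs) hc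
  have hhi := hookNum_le (hpos s hs) (hpos t ht) hc
  rcases rootExponent_extremal_of_dvd (Nat.Coprime.coprime_mul_left_right hcop) hs ht hst
    (by omega) (by omega) hdvd with ⟨rfl, rfl, hH⟩ | ⟨rfl, rfl, hH⟩
  · obtain ⟨h0, hr⟩ := eq_singleton_and_eq_replicate_of_hookNum_eq (hpos 0 hs) (hpos _ ht) hc
      (by omega)
    have h0pos := hpos 0 hs _ (h0 ▸ List.mem_singleton_self _)
    refine ⟨(Λ (p % m)).sum, by omega, ?_, hr, eq_nil_of_sum_add_sum_eq hpos hsize hs ht hst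
      (by omega)⟩
    rw [if_neg (by omega), h0]
    congr 1
    omega
  · have hr := eq_replicate_of_hookNum_eq (β := Λ 0) (hpos _ hs) hc (by omega)
    refine ⟨n, le_rfl, ?_, ?_, eq_nil_of_sum_add_sum_eq hpos hsize ht hs hst.symm (by omega)⟩
    · exact (if_pos rfl).symm ▸ List.eq_nil_of_sum_eq_zero_of_pos (hpos 0 ht) (by omega)
    · rwa [show (Λ (p % m)).sum = n by omega] at hr

theorem exists_dvd_of_shape (hm : 0 < m) (hn : 0 < n) (hpm : p % m ≠ 0) {k : ℕ} (hk : k ≤ n)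
    (h0 : Λ 0 = if k = n then [] else [n - k]) (hr : Λ (p % m) = List.replicate k 1) :
    ∃ s < m, ∃ i j, IsCell (Λ s) i j ∧ ∃ t < m, ((m * n : ℕ) : ℤ) ∣
      hookNum (Λ s) (Λ t) i j * p + rootExponent n p s - rootExponent n p t := by
  have hdiv := Int.emod_def p m
  by_cases hkn : k = n
  · rw [if_pos hkn] at h0
    rw [hkn] at hr
    have hpart : partOf (List.replicate n 1) n = 1 := by
      simp [partOf, hn]
    refine ⟨p % m, Nat.mod_lt _ hm, n, 1, ?_, 0, hm, ?_⟩
    · rw [hr, IsCell, hpart]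
      omega
    · refine ⟨-(p / m : ℤ), ?_⟩
      rw [hr, h0, hookNum, hpart, show conjOf [] 1 = 0 from rfl]
      simp only [rootExponent, if_neg hpm]
      push_cast
      linear_combination (n : ℤ) * hdiv
  · rw [if_neg hkn] at h0
    have hpart : partOf [n - k] 1 = n - k := rfl
    have hconj : conjOf (List.replicate k 1) 1 = k := by
      rw [conjOf_one (by simp), List.length_replicate]
    refine ⟨0, hm, 1, 1, ?_, p % m, Nat.mod_lt _ hm, ?_⟩
    · rw [h0, IsCell, hpart]
      omega
    · refine ⟨(p / m : ℤ), ?_⟩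
      rw [hr, h0, hookNum, hconj, hpart]
      simp only [rootExponent, if_neg hpm]
      push_cast [Nat.cast_sub hk]
      linear_combination (-n : ℤ) * hdiv

end Multipartition

theorem schur_vanishing_iff_general (m n p : ℕ) (hm : 2 ≤ m) (hn : 1 ≤ n)
    (hcop : Nat.Coprime p (m * n))
    (Λ : ℕ → List ℕ)
    (hsort : ∀ s < m, (Λ s).Pairwise (· ≥ ·))
    (hpos : ∀ s < m, ∀ x ∈ Λ s, 0 < x)
    (hsize : ∑ s ∈ Finset.range m, (Λ s).sum = n) :
    let ζ : ℂ := Complex.exp (2 * Real.pi * Complex.I * p / (m * n))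
    let Q : ℕ → ℂ := fun s =>
      if s = 0 then ζ else Complex.exp (2 * Real.pi * Complex.I * s / m)
    (∏ s ∈ Finset.range m, cellProd (Λ s) (fun i j =>
        ∏ t ∈ Finset.range m, (ζ ^ hookNum (Λ s) (Λ t) i j * Q s * (Q t)⁻¹ - 1))) = 0 ↔
      ∃ k ≤ n, Λ 0 = (if k = n then [] else [n - k]) ∧
        Λ (p % m) = List.replicate k 1 ∧
        ∀ s < m, s ≠ 0 → s ≠ p % m → Λ s = [] := by
  intro ζ Q
  have hM : m * n ≠ 0 := by positivity
  set ω := Complex.exp (2 * Real.pi * Complex.I / (m * n : ℕ)) with hω_def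
  have hω : IsPrimitiveRoot ω (m * n) := Complex.isPrimitiveRoot_exp _ hM
  have hζ : ζ = ω ^ p := by
    rw [hω_def, ← Complex.exp_nat_mul]
    show Complex.exp _ = _
    congr 1
    push_cast
    ring
  have hQ : ∀ s, Q s = ω ^ rootExponent n p s := by
    intro s
    by_cases hs : s = 0
    · simp [Q, rootExponent, hs, hζ]
    · simp only [Q, rootExponent, if_neg hs, hω_def, ← Complex.exp_nat_mul]
      have : (n : ℂ) ≠ 0 := by exact_mod_cast (by omega : n ≠ 0)
      congr 1
      push_cast
      field_simp
  have hpm : p % m ≠ 0 := fun h => by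
    have := Nat.Coprime.eq_one_of_dvd (Nat.Coprime.coprime_mul_right_right hcop).symm
      (Nat.dvd_of_mod_eq_zero h)
    omega
  simp only [hQ, hζ, prod_eq_zero_iff, mem_range, cellProd_eq_zero_iff,
    hω.pow_zpow_mul_pow_mul_inv_pow_sub_one_eq_zero_iff hM]
  constructor
  · rintro ⟨s, hs, i, j, hc, t, ht, hdvd⟩
    exact exists_shape_of_dvd hm hcop hsort hpos hsize hs ht hc hdvd
  · rintro ⟨k, hk, h0, hr, -⟩
    exact exists_dvd_of_shape (by omega) hn hpm hk h0 hr

/-- For an `m`-multipartition `Λ` of `n` and `p` coprime to `mn`, the triple product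
appearing in Chlouveraki's formula for the Schur element, evaluated at `ζ = ζ_{mn}^p`,
vanishes if and only if `Λ` is the multipartition `((n−k), ∅, …, ∅, (1^k), ∅, …, ∅)`
(with `(1^k)` in slot `p mod m`) corresponding to `⋀^k V^{σ_p}` for some `0 ≤ k ≤ n`. -/
theorem schur_vanishing_iff (m n p : ℕ) (hm : 2 ≤ m) (hn : 1 ≤ n) (hp : 1 ≤ p)
    (hcop : Nat.Coprime p (m * n))
    (Λ : ℕ → List ℕ)
    (hsort : ∀ s < m, (Λ s).Pairwise (· ≥ ·))
    (hpos : ∀ s < m, ∀ x ∈ Λ s, 0 < x)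
    (hsize : ∑ s ∈ Finset.range m, (Λ s).sum = n) :
    let ζ : ℂ := Complex.exp (2 * Real.pi * Complex.I * p / (m * n))
    let Q : ℕ → ℂ := fun s =>
      if s = 0 then ζ else Complex.exp (2 * Real.pi * Complex.I * s / m)
    (∏ s ∈ Finset.range m, cellProd (Λ s) (fun i j =>
        ∏ t ∈ Finset.range m, (ζ ^ hookNum (Λ s) (Λ t) i j * Q s * (Q t)⁻¹ - 1))) = 0 ↔
      ∃ k ≤ n, Λ 0 = (if k = n then [] else [n - k]) ∧
        Λ (p % m) = List.replicate k 1 ∧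
        ∀ s < m, s ≠ 0 → s ≠ p % m → Λ s = [] :=
  schur_vanishing_iff_general m n p hm hn hcop Λ hsort hpos hsize
end
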